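/- For every integer n ≥ 1, evaluating the polynomials at the imaginary unit i ∈ ℂ, one has Σ_{k=0}^{n−1} |P_k(i;q)|² = (√[n]/(2i))·(P_n(i;q)·P_{n−1}(−i;q) − P_{n−1}(i;q)·P_n(−i;q)) = (1/[n−1]!)·(Σ_{m=0}^{⌊n/2⌋} α_{2m−1;n−1})·(Σ_{m=0}^{⌊(n−1)/2⌋} α_{2m−1;n−2}). -/

import Mathlib

open Polynomial Filter

/-- The symmetric q-number `[n] = (q^n - q^{-n})/(q - q⁻¹)`. -/
noncomputable def qnum (q : ℝ) (n : ℕ) : ℝ := (q ^ (n : ℤ) - q ^ (-(n : ℤ))) / (q - q⁻¹)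

/-- The q-factorial `[n]! = [1][2]⋯[n]`. -/
noncomputable def qfact (q : ℝ) : ℕ → ℝ
  | 0 => 1
  | n + 1 => qfact q n * qnum q (n + 1)

/-- The even q-double factorial: `evenDF q n = [2n]!! = [2n][2n-2]⋯[2]`. -/
noncomputable def evenDF (q : ℝ) : ℕ → ℝ
  | 0 => 1
  | n + 1 => qnum q (2 * (n + 1)) * evenDF q n

/-- The odd q-double factorial: `oddDF q n = [2n-1]!! = [2n-1][2n-3]⋯[1]`. -/
noncomputable def oddDF (q : ℝ) : ℕ → ℝ
  | 0 => 1
  | n + 1 => qnum q (2 * n + 1) * oddDF q n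

/-- `alphaC q m n = α_{2m-1;n}`, with `α_{-1;n} = 1` and
`α_{2m-1;n} = Σ_{k=2m-1}^{n} [k]·α_{2m-3;k-2}`. -/
noncomputable def alphaC (q : ℝ) : ℕ → ℕ → ℝ
  | 0, _ => 1
  | m + 1, n => ∑ k ∈ Finset.Icc (2 * m + 1) n, qnum q k * alphaC q m (k - 2)

/-- `betaC q m n = β_{2m;n}`, with `β_{0;n} = 1` and
`β_{2m;n} = Σ_{k=2m}^{n} [k]·β_{2m-2;k-2}`. -/
noncomputable def betaC (q : ℝ) : ℕ → ℕ → ℝ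
  | 0, _ => 1
  | m + 1, n => ∑ k ∈ Finset.Icc (2 * m + 2) n, qnum q k * betaC q m (k - 2)

lemma qnum_pos {q : ℝ} (hq : 0 < q) (hq1 : q ≠ 1) {k : ℕ} (hk : 1 ≤ k) : 0 < qnum q k := by
  unfold qnum
  have hk' : (0:ℤ) < (k:ℤ) := by exact_mod_cast hk
  rcases lt_or_gt_of_ne hq1 with h | h
  · apply div_pos_of_neg_of_neg
    · have h1 : q ^ (k:ℤ) < 1 := zpow_lt_one₀ hq h hk'
      have h2 : 1 < q ^ (-(k:ℤ)) := one_lt_zpow_of_neg₀ hq h (by omega)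
      linarith
    · have : q⁻¹ > 1 := (one_lt_inv₀ hq).2 h
      linarith
  · apply div_pos
    · have h1 : 1 < q ^ (k:ℤ) := one_lt_zpow₀ h hk'
      have h2 : q ^ (-(k:ℤ)) < 1 := zpow_lt_one_of_neg₀ h (by omega)
      linarith
    · have : q⁻¹ < 1 := inv_lt_one_of_one_lt₀ h
      linarith

lemma qnum_one' {q : ℝ} (hq : 0 < q) (hq1 : q ≠ 1) : qnum q 1 = 1 := by
  have := qnum_pos hq hq1 (le_refl 1)
  unfold qnum at *
  rw [show ((1:ℕ):ℤ) = 1 by norm_num, zpow_one, zpow_neg_one] at *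
  exact div_self (by rintro h; rw [h] at this; simp at this)

lemma qfact_pos {q : ℝ} (hq : 0 < q) (hq1 : q ≠ 1) : ∀ n, 0 < qfact q n
  | 0 => one_pos
  | n + 1 => mul_pos (qfact_pos hq hq1 n) (qnum_pos hq hq1 (by omega))

/-- The coefficient sequence: `P n (i) = i^n · cseq n / √(qfact n)`. -/
noncomputable def cseq (q : ℝ) : ℕ → ℝ
  | 0 => 1
  | 1 => 1
  | n + 2 => cseq q (n + 1) + qnum q (n + 1) * cseq q n

lemma sqrt_qfact_succ {q : ℝ} (hq : 0 < q) (hq1 : q ≠ 1) (n : ℕ) :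
    Real.sqrt (qfact q (n+1)) = Real.sqrt (qfact q n) * Real.sqrt (qnum q (n+1)) := by
  rw [show qfact q (n+1) = qfact q n * qnum q (n+1) from rfl,
    Real.sqrt_mul (qfact_pos hq hq1 n).le]

lemma alg_step (z F S1 S2 c0 c1 Q1 A : ℂ) (hz : z * z = -1) (hS1sq : S1 * S1 = Q1)
    (hF : F ≠ 0) (hS1 : S1 ≠ 0) (hS2 : S2 ≠ 0) (n : ℕ)
    (heq : S1 * (z ^ n * (c0 / F)) + S2 * A = z * (z ^ (n + 1) * (c1 / (F * S1)))) :
    A = z ^ (n + 2) * ((c1 + Q1 * c0) / (F * S1 * S2)) := by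
  have h1 : S2 * A = z ^ (n + 2) * (c1 / (F * S1)) - S1 * (z ^ n * (c0 / F)) := by
    rw [pow_succ, pow_succ]
    linear_combination heq
  have h2 : A = (z ^ (n + 2) * (c1 / (F * S1)) - S1 * (z ^ n * (c0 / F))) / S2 := by
    field_simp at h1 ⊢
    linear_combination h1
  rw [h2]
  rw [show z ^ (n + 2) = -(z ^ n) by rw [pow_succ, pow_succ]; rw [mul_assoc, hz]; ring]
  field_simp
  ring_nf
  linear_combination (-(z ^ n * c0)) * hS1sq

lemma aeval_P {q : ℝ} (hq : 0 < q) (hq1 : q ≠ 1)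
    (P : ℕ → Polynomial ℝ) (hP0 : P 0 = 1) (hP1 : P 1 = X)
    (hPrec : ∀ n : ℕ, 1 ≤ n →
      Real.sqrt (qnum q n) • P (n - 1) + Real.sqrt (qnum q (n + 1)) • P (n + 1) = X * P n)
    (z : ℂ) (hz : z * z = -1) (n : ℕ) :
    aeval z (P n) = z ^ n * ((cseq q n / Real.sqrt (qfact q n) : ℝ) : ℂ) := by
  induction n using Nat.twoStepInduction with
  | zero => simp [hP0, cseq, qfact]
  | one => simp [hP1, cseq, qfact, qnum_one' hq hq1]
  | more n ih0 ih1 =>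
    have hrec := hPrec (n+1) (by omega)
    simp only [Nat.add_sub_cancel] at hrec
    have heq := congrArg (aeval z) hrec
    simp only [map_add, map_smul, map_mul, aeval_X, Complex.real_smul] at heq
    rw [ih0, ih1, sqrt_qfact_succ hq hq1 n] at heq
    have hfp := (qfact_pos hq hq1 n)
    have h1p := qnum_pos hq hq1 (k := n+1) (by omega)
    have h2p := qnum_pos hq hq1 (k := n+2) (by omega)
    have hF : ((Real.sqrt (qfact q n) : ℝ) : ℂ) ≠ 0 := by
      exact_mod_cast (Real.sqrt_pos.2 hfp).ne'
    have hS1 : ((Real.sqrt (qnum q (n+1)) : ℝ) : ℂ) ≠ 0 := by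
      exact_mod_cast (Real.sqrt_pos.2 h1p).ne'
    have hS2 : ((Real.sqrt (qnum q (n+2)) : ℝ) : ℂ) ≠ 0 := by
      exact_mod_cast (Real.sqrt_pos.2 h2p).ne'
    have hS1sq : ((Real.sqrt (qnum q (n+1)) : ℝ) : ℂ) * ((Real.sqrt (qnum q (n+1)) : ℝ) : ℂ)
        = ((qnum q (n+1) : ℝ) : ℂ) := by
      rw [← Complex.ofReal_mul, Real.mul_self_sqrt h1p.le]
    rw [show cseq q (n+2) = cseq q (n+1) + qnum q (n+1) * cseq q n from rfl,
      sqrt_qfact_succ hq hq1 (n+1), sqrt_qfact_succ hq hq1 n]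
    push_cast at heq ⊢
    exact alg_step z _ _ _ _ _ _ _ hz hS1sq hF hS1 hS2 n heq

lemma sum_sq {q : ℝ} (hq : 0 < q) (hq1 : q ≠ 1) (n : ℕ) :
    ∑ k ∈ Finset.range (n + 1), (cseq q k) ^ 2 / qfact q k
      = cseq q (n + 1) * cseq q n / qfact q n := by
  induction n with
  | zero => norm_num [cseq, qfact]
  | succ n ih =>
    rw [Finset.sum_range_succ, ih]
    have hf := (qfact_pos hq hq1 n).ne'
    have hq' := (qnum_pos hq hq1 (k := n+1) (by omega)).ne'
    rw [show qfact q (n+1) = qfact q n * qnum q (n+1) from rfl,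
      show cseq q (n+2) = cseq q (n+1) + qnum q (n+1) * cseq q n from rfl]
    field_simp
    ring

lemma alphaC_eq_zero (q : ℝ) (m n : ℕ) (h : n < 2 * m + 1) : alphaC q (m + 1) n = 0 := by
  show (∑ k ∈ Finset.Icc (2 * m + 1) n, qnum q k * alphaC q m (k - 2)) = 0
  rw [Finset.Icc_eq_empty (by omega)]
  simp

lemma alphaC_peel (q : ℝ) (m n : ℕ) :
    alphaC q (m + 1) (n + 2) = alphaC q (m + 1) (n + 1) + qnum q (n + 2) * alphaC q m n := by
  by_cases h : 2 * m + 1 ≤ n + 2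
  · show (∑ k ∈ Finset.Icc (2 * m + 1) (n + 2), qnum q k * alphaC q m (k - 2)) = _
    rw [Finset.sum_Icc_succ_top h]
    rfl
  · match m with
    | 0 => omega
    | m + 1 =>
      rw [alphaC_eq_zero q (m+1) (n+2) (by omega), alphaC_eq_zero q (m+1) (n+1) (by omega),
        alphaC_eq_zero q m n (by omega)]
      ring

noncomputable def Dsum (q : ℝ) (N : ℕ) : ℝ := ∑ m ∈ Finset.range (N + 1), alphaC q m N

lemma Dsum_rec (q : ℝ) (N : ℕ) :
    Dsum q (N + 2) = Dsum q (N + 1) + qnum q (N + 2) * Dsum q N := by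
  unfold Dsum
  rw [Finset.sum_range_succ' (fun m => alphaC q m (N + 2)) (N + 2)]
  have hcong : ∀ m ∈ Finset.range (N + 2), alphaC q (m + 1) (N + 2)
      = alphaC q (m + 1) (N + 1) + qnum q (N + 2) * alphaC q m N :=
    fun m _ => alphaC_peel q m N
  rw [Finset.sum_congr rfl hcong, Finset.sum_add_distrib, ← Finset.mul_sum]
  have e := Finset.sum_range_succ' (fun m => alphaC q m (N + 1)) (N + 2)
  have h3 : ∑ m ∈ Finset.range (N + 2 + 1), alphaC q m (N + 1)
      = (∑ m ∈ Finset.range (N + 1 + 1), alphaC q m (N + 1)) + alphaC q (N + 2) (N + 1) :=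
    Finset.sum_range_succ _ _
  have hz3 : alphaC q (N + 2) (N + 1) = 0 := alphaC_eq_zero q (N + 1) (N + 1) (by omega)
  have h2 : ∑ m ∈ Finset.range (N + 1 + 1), alphaC q m N
      = (∑ m ∈ Finset.range (N + 1), alphaC q m N) + alphaC q (N + 1) N :=
    Finset.sum_range_succ _ _
  have hz2 : alphaC q (N + 1) N = 0 := alphaC_eq_zero q N N (by omega)
  have ha1 : alphaC q 0 (N + 1) = 1 := rfl
  have ha2 : alphaC q 0 (N + 2) = 1 := rfl
  linear_combination -e + h3 + hz3 + qnum q (N + 2) * h2 + qnum q (N + 2) * hz2 + ha2 - ha1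

lemma Dsum_eq_cseq {q : ℝ} (hq : 0 < q) (hq1 : q ≠ 1) : ∀ N, Dsum q N = cseq q (N + 1) := by
  intro N
  induction N using Nat.twoStepInduction with
  | zero => simp [Dsum, alphaC, cseq]
  | one =>
    show (∑ m ∈ Finset.range 2, alphaC q m 1) = cseq q 2
    rw [Finset.sum_range_succ, Finset.sum_range_one]
    show alphaC q 0 1 + (∑ k ∈ Finset.Icc 1 1, qnum q k * alphaC q 0 (k - 2)) = cseq q 2
    rw [Finset.Icc_self, Finset.sum_singleton]
    show 1 + qnum q 1 * 1 = cseq q 1 + qnum q 1 * cseq q 0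
    rw [qnum_one' hq hq1]; norm_num [cseq]
  | more n ih0 ih1 =>
    rw [Dsum_rec, ih0, ih1]
    rfl

lemma trunc1 (q : ℝ) (n : ℕ) (hn : 1 ≤ n) :
    ∑ m ∈ Finset.range (n / 2 + 1), alphaC q m (n - 1) = Dsum q (n - 1) := by
  unfold Dsum
  rw [show n - 1 + 1 = n by omega]
  symm
  apply (Finset.sum_subset (Finset.range_subset_range.2 (by omega)) _).symm
  intro x hx hnx
  rw [Finset.mem_range] at hx hnx
  match x, hnx with
  | 0, hnx => omega
  | m + 1, hnx => exact alphaC_eq_zero q m (n - 1) (by omega)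

lemma trunc2 (q : ℝ) (n : ℕ) (hn : 1 ≤ n) :
    ∑ m ∈ Finset.range ((n - 1) / 2 + 1), alphaC q m (n - 2) = Dsum q (n - 2) := by
  unfold Dsum
  symm
  apply (Finset.sum_subset (Finset.range_subset_range.2 (by omega)) _).symm
  intro x hx hnx
  rw [Finset.mem_range] at hx hnx
  match x, hnx with
  | 0, hnx => omega
  | m + 1, hnx => exact alphaC_eq_zero q m (n - 2) (by omega)

lemma alg2' (F S c0 c1 u v i : ℂ) (hF : F ≠ 0) (hS : S ≠ 0) (hi : i ≠ 0)
    (huv : u * v = 1) :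
    S / (2 * i) * (u * i * (c1 / (F * S)) * (v * (c0 / F))
      - u * (c0 / F) * (v * (-i) * (c1 / (F * S)))) = c1 * c0 / (F * F) := by
  field_simp
  linear_combination (2 * c1 * c0) * huv

/-- For every `n ≥ 1`, evaluating the polynomials at `i ∈ ℂ`,
`Σ_{k=0}^{n-1} |P_k(i;q)|² = (√[n]/(2i))·(P_n(i)P_{n-1}(−i) − P_{n-1}(i)P_n(−i))
= (1/[n−1]!)·(Σ_{m=0}^{⌊n/2⌋} α_{2m-1;n-1})·(Σ_{m=0}^{⌊(n-1)/2⌋} α_{2m-1;n-2})`. -/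
theorem stmt13 (q : ℝ) (hq : 0 < q) (hq1 : q ≠ 1)
    (P : ℕ → Polynomial ℝ)
    (hP0 : P 0 = 1) (hP1 : P 1 = X)
    (hPrec : ∀ n : ℕ, 1 ≤ n →
      Real.sqrt (qnum q n) • P (n - 1) + Real.sqrt (qnum q (n + 1)) • P (n + 1) = X * P n)
    (n : ℕ) (hn : 1 ≤ n) :
    (((∑ k ∈ Finset.range n, ‖aeval Complex.I (P k)‖ ^ 2 : ℝ) : ℂ)
      = ((Real.sqrt (qnum q n) : ℂ) / (2 * Complex.I)) *
        (aeval Complex.I (P n) * aeval (-Complex.I) (P (n - 1))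
          - aeval Complex.I (P (n - 1)) * aeval (-Complex.I) (P n))) ∧
    ((∑ k ∈ Finset.range n, ‖aeval Complex.I (P k)‖ ^ 2 : ℝ)
      = (qfact q (n - 1))⁻¹ * (∑ m ∈ Finset.range (n / 2 + 1), alphaC q m (n - 1))
          * (∑ m ∈ Finset.range ((n - 1) / 2 + 1), alphaC q m (n - 2))) := by
  have ht1 := trunc1 q n hn
  have ht2 := trunc2 q n hn
  obtain ⟨m, rfl⟩ : ∃ m, n = m + 1 := ⟨n - 1, by omega⟩
  have hA := aeval_P hq hq1 P hP0 hP1 hPrec Complex.I (by rw [Complex.I_mul_I])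
  have hB := aeval_P hq hq1 P hP0 hP1 hPrec (-Complex.I)
    (by rw [neg_mul_neg, Complex.I_mul_I])
  have habs : ∀ k, ‖aeval Complex.I (P k)‖ ^ 2 = cseq q k ^ 2 / qfact q k := by
    intro k
    rw [hA k, norm_mul, norm_pow, Complex.norm_I, one_pow, one_mul, Complex.norm_real, Real.norm_eq_abs, sq_abs,
      div_pow, Real.sq_sqrt (qfact_pos hq hq1 k).le]
  have hsum : (∑ k ∈ Finset.range (m + 1), ‖aeval Complex.I (P k)‖ ^ 2 : ℝ)
      = cseq q (m + 1) * cseq q m / qfact q m := by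
    simp only [habs]
    exact sum_sq hq hq1 m
  have hfp := qfact_pos hq hq1 m
  have hsp := qnum_pos hq hq1 (k := m + 1) (by omega)
  have hF : ((Real.sqrt (qfact q m) : ℝ) : ℂ) ≠ 0 := by
    exact_mod_cast (Real.sqrt_pos.2 hfp).ne'
  have hS : ((Real.sqrt (qnum q (m + 1)) : ℝ) : ℂ) ≠ 0 := by
    exact_mod_cast (Real.sqrt_pos.2 hsp).ne'
  have hFf : ((Real.sqrt (qfact q m) : ℝ) : ℂ) * ((Real.sqrt (qfact q m) : ℝ) : ℂ)
      = ((qfact q m : ℝ) : ℂ) := by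
    rw [← Complex.ofReal_mul, Real.mul_self_sqrt hfp.le]
  have huv : Complex.I ^ m * (-Complex.I) ^ m = 1 := by
    rw [← mul_pow]
    simp [Complex.I_mul_I]
  constructor
  · rw [hsum]
    simp only [Nat.add_sub_cancel]
    rw [hA (m + 1), hB (m + 1), hA m, hB m, sqrt_qfact_succ hq hq1 m, pow_succ, pow_succ]
    push_cast
    rw [← hFf]
    linear_combination (alg2' ((Real.sqrt (qfact q m) : ℝ) : ℂ)
      ((Real.sqrt (qnum q (m + 1)) : ℝ) : ℂ) ((cseq q m : ℝ) : ℂ) ((cseq q (m + 1) : ℝ) : ℂ)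
      (Complex.I ^ m) ((-Complex.I) ^ m) Complex.I hF hS Complex.I_ne_zero huv).symm
  · rw [hsum, ht1, ht2]
    simp only [Nat.add_sub_cancel]
    rw [Dsum_eq_cseq hq hq1 m]
    have h2 : Dsum q (m + 1 - 2) = cseq q m := by
      match m with
      | 0 => simp [Dsum, alphaC, cseq]
      | m + 1 => exact Dsum_eq_cseq hq hq1 m
    rw [h2]
    rw [div_eq_mul_inv]
    ring
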